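/- arXiv:2604.20858 — 2 statements merged into one kernel-verified Lean document; each statement's English description precedes it below -/
import Mathlib

section
/- Let a₁, …, aₙ ∈ ℝᵈ be unit vectors and u₁, u₂ ∈ ℝᵈ unit vectors with u₁ᵀu₂ ≥ 1 − δ. Let S ⊆ Fin n be a set such that for all i ∈ S and j ∉ S, a_iᵀu₁ − a_jᵀu₁ ≥ γ with γ > 0. If δ < γ²/8, then for all i ∈ S and j ∉ S, a_iᵀu₂ > a_jᵀu₂. -/
open scoped RealInnerProductSpace

theorem routing_stability_core {d n : ℕ} (a : Fin n → EuclideanSpace ℝ (Fin d))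
    (ha : ∀ i, ‖a i‖ = 1)
    (u₁ u₂ : EuclideanSpace ℝ (Fin d)) (hu₁ : ‖u₁‖ = 1) (hu₂ : ‖u₂‖ = 1)
    (δ γ : ℝ) (hcos : ⟪u₁, u₂⟫ ≥ 1 - δ)
    (S : Finset (Fin n))
    (hmargin : ∀ i ∈ S, ∀ j ∉ S, ⟪a i, u₁⟫ - ⟪a j, u₁⟫ ≥ γ)
    (hγ : γ > 0) (hδ : δ < γ ^ 2 / 8) :
    ∀ i ∈ S, ∀ j ∉ S, ⟪a i, u₂⟫ > ⟪a j, u₂⟫ := by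
  intro i hi j hj
  have hsq : ‖u₁ - u₂‖ ^ 2 ≤ 2 * δ := by
    have := norm_sub_sq_real u₁ u₂
    rw [hu₁, hu₂] at this
    nlinarith
  have hδ0 : (0:ℝ) ≤ δ := by nlinarith [sq_nonneg ‖u₁ - u₂‖]
  have hlip : ∀ k : Fin n, |⟪a k, u₁⟫ - ⟪a k, u₂⟫| ≤ ‖u₁ - u₂‖ := by
    intro k
    have := abs_real_inner_le_norm (a k) (u₁ - u₂)
    rwa [inner_sub_right, ha k, one_mul] at this
  have h1 := hlip i
  have h2 := hlip j
  have hm := hmargin i hi j hj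
  have hn : ‖u₁ - u₂‖ < γ / 2 := by
    nlinarith [norm_nonneg (u₁ - u₂), sq_nonneg (‖u₁ - u₂‖ - γ / 2)]
  have := abs_le.mp h1
  have := abs_le.mp h2
  linarith [this.1, this.2, (abs_le.mp h1).1, (abs_le.mp h1).2]
end

section
/- Let a₁, …, aₙ ∈ ℝᵈ be unit vectors, and for a unit vector u let Hᵢ(u) = aᵢᵀu. Suppose the k-th largest value of H(u₁) minus the (k+1)-th largest value of H(u₁) equals γ > 0 (with scores pairwise distinct on the top-k boundary), and u₁ᵀu₂ ≥ 1 − δ with δ < γ²/8. Then the set of indices of the k largest entries of H(u₂) equals the set of indices of the k largest entries of H(u₁). -/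
open scoped RealInnerProductSpace

/-- Routing stability (Theorem A.1): if `S₁` is the set of indices of the `k` largest
cosine scores for `u₁` with top-`k` margin `γ` (expressed by the separation condition
that every selected score exceeds every unselected score by at least `γ`), and
`u₁ᵀu₂ ≥ 1 - δ` with `δ < γ²/8`, then any top-`k` index set `S₂` for `u₂`
(a set of size `k` whose scores all strictly exceed those outside) equals `S₁`. -/
theorem routing_stability_topk {d n k : ℕ} (a : Fin n → EuclideanSpace ℝ (Fin d))
    (ha : ∀ i, ‖a i‖ = 1)
    (u₁ u₂ : EuclideanSpace ℝ (Fin d)) (hu₁ : ‖u₁‖ = 1) (hu₂ : ‖u₂‖ = 1)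
    (δ γ : ℝ) (hγ : γ > 0) (hδ : δ < γ ^ 2 / 8)
    (hcos : ⟪u₁, u₂⟫ ≥ 1 - δ)
    (S₁ : Finset (Fin n)) (hS₁card : S₁.card = k)
    (hS₁margin : ∀ i ∈ S₁, ∀ j ∉ S₁, ⟪a i, u₁⟫ - ⟪a j, u₁⟫ ≥ γ)
    (S₂ : Finset (Fin n)) (hS₂card : S₂.card = k)
    (hS₂top : ∀ i ∈ S₂, ∀ j ∉ S₂, ⟪a i, u₂⟫ > ⟪a j, u₂⟫) :
    S₂ = S₁ := by
  have hnorm_sq : ‖u₁ - u₂‖ ^ 2 ≤ 2 * δ := by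
    have := @norm_sub_sq_real (EuclideanSpace ℝ (Fin d)) _ _ u₁ u₂
    rw [hu₁, hu₂] at this
    nlinarith
  have hnorm : ‖u₁ - u₂‖ < γ / 2 := by
    nlinarith [norm_nonneg (u₁ - u₂), hγ]
  have hpert : ∀ i, |⟪a i, u₁⟫ - ⟪a i, u₂⟫| < γ / 2 := by
    intro i
    have h1 : ⟪a i, u₁⟫ - ⟪a i, u₂⟫ = ⟪a i, u₁ - u₂⟫ := (inner_sub_right _ _ _).symm
    rw [h1]
    calc |⟪a i, u₁ - u₂⟫| ≤ ‖a i‖ * ‖u₁ - u₂‖ := abs_real_inner_le_norm _ _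
      _ = ‖u₁ - u₂‖ := by rw [ha i, one_mul]
      _ < γ / 2 := hnorm
  have key : ∀ i ∈ S₁, ∀ j ∉ S₁, ⟪a i, u₂⟫ > ⟪a j, u₂⟫ := by
    intro i hi j hj
    have hm := hS₁margin i hi j hj
    have h1 := abs_lt.mp (hpert i)
    have h2 := abs_lt.mp (hpert j)
    linarith [h1.1, h1.2, h2.1, h2.2]
  by_contra hne
  have hns : ¬ S₂ ⊆ S₁ := fun hsub =>
    hne (Finset.eq_of_subset_of_card_le hsub (by omega))
  obtain ⟨i, hi₂, hi₁⟩ := Finset.not_subset.mp hns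
  have hns' : ¬ S₁ ⊆ S₂ := by
    intro hsub
    exact hi₁ (Finset.eq_of_subset_of_card_le hsub (by omega) ▸ hi₂)
  obtain ⟨j, hj₁, hj₂⟩ := Finset.not_subset.mp hns'
  have h1 := hS₂top i hi₂ j hj₂
  have h2 := key j hj₁ i hi₁
  linarith
end
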